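/- arXiv:2504.01918 — 4 statements merged into one kernel-verified Lean document; each statement's English description precedes it below -/
import Mathlib

section
/- Let D be a strong digraph admitting an ear decomposition in which every ear has length at least 2 (i.e., D ∈ LE_2). Then D has an independent set of vertices that intersects every longest directed path of D. Consequently, the Laborde–Payan–Xuong conjecture holds for every digraph in LE_i with i ≥ 2. -/
/-- A digraph on a vertex type `V`: a set of vertices together with an arc
relation whose endpoints lie in the vertex set.  (No loops are allowed in this
paper; this is the hypothesis `Digr.Loopless` below.  Multiple arcs cannot be
represented.) -/
structure Digr (V : Type) where
  verts : Set V
  Adj : V → V → Prop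
  adj_dom : ∀ ⦃u v : V⦄, Adj u v → u ∈ verts ∧ v ∈ verts

namespace Digr

variable {V : Type}

/-- A digraph has no loops. -/
def Loopless (D : Digr V) : Prop := ∀ v, ¬ D.Adj v v

/-- An asymmetrical digraph (an oriented graph): it never contains both arcs
`(u,v)` and `(v,u)`. -/
def Asymmetrical (D : Digr V) : Prop := ∀ u v, D.Adj u v → ¬ D.Adj v u

/-- `H` is a subdigraph of `D`. -/
def IsSubdigraph (H D : Digr V) : Prop :=
  H.verts ⊆ D.verts ∧ ∀ ⦃u v⦄, H.Adj u v → D.Adj u v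

/-- Union of two digraphs. -/
def union (D₁ D₂ : Digr V) : Digr V where
  verts := D₁.verts ∪ D₂.verts
  Adj u v := D₁.Adj u v ∨ D₂.Adj u v
  adj_dom := by
    rintro u v (h | h)
    · exact ⟨Or.inl (D₁.adj_dom h).1, Or.inl (D₁.adj_dom h).2⟩
    · exact ⟨Or.inr (D₂.adj_dom h).1, Or.inr (D₂.adj_dom h).2⟩

/-- A digraph is strong if every vertex can reach every vertex by a directed
walk (equivalently, by a directed path). -/
def IsStrong (D : Digr V) : Prop :=
  ∀ x ∈ D.verts, ∀ y ∈ D.verts, Relation.ReflTransGen D.Adj x y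

/-- `D` is precisely a directed cycle with `n` vertices (`n ≥ 2`). -/
def IsCycleOfLength (D : Digr V) (n : ℕ) : Prop :=
  2 ≤ n ∧ ∃ f : ZMod n → V, Function.Injective f ∧
    D.verts = Set.range f ∧ ∀ u v, (D.Adj u v ↔ ∃ i, u = f i ∧ v = f (i + 1))

/-- `D` is precisely a directed cycle. -/
def IsCycleDigr (D : Digr V) : Prop := ∃ n, D.IsCycleOfLength n

/-- The underlying (undirected) simple graph on the vertex set of `D`. -/
def UG (D : Digr V) : SimpleGraph D.verts where
  Adj u v := u ≠ v ∧ (D.Adj u v ∨ D.Adj v u)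
  symm := by constructor; rintro u v ⟨hne, h⟩; exact ⟨hne.symm, h.symm⟩
  loopless := by constructor; rintro u ⟨hne, _⟩; exact hne rfl

/-- `D` is nonseparable: its underlying graph is connected and deleting any
single vertex leaves it connected (no cut vertex). -/
def IsNonseparable (D : Digr V) : Prop :=
  D.UG.Connected ∧ ∀ v : D.verts, (D.UG.induce {u | u ≠ v}).Connected

/-- The out-neighbourhood `N⁺(v)`. -/
def outNbhd (D : Digr V) (v : V) : Set V := {u | D.Adj v u}

/-- The second out-neighbourhood `N⁺⁺(v) = (⋃ u ∈ N⁺(v), N⁺(u)) \ N⁺(v)`. -/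
def secondOutNbhd (D : Digr V) (v : V) : Set V :=
  {w | ∃ u, D.Adj v u ∧ D.Adj u w} \ D.outNbhd v

end Digr

/-- An independent set of vertices: no arc between two distinct members. -/
def IsIndependent {V : Type} (D : Digr V) (S : Set V) : Prop :=
  ∀ u ∈ S, ∀ v ∈ S, u ≠ v → ¬ D.Adj u v

/-- An absorbent set: every vertex outside it has an out-neighbour inside it. -/
def IsAbsorbent {V : Type} (D : Digr V) (S : Set V) : Prop :=
  ∀ u ∈ D.verts, u ∉ S → ∃ v ∈ S, D.Adj u v

/-- A kernel: an independent absorbent set of vertices. -/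
def IsKernel {V : Type} (D : Digr V) (N : Set V) : Prop :=
  N ⊆ D.verts ∧ IsIndependent D N ∧ IsAbsorbent D N

/-- `D` has a kernel. -/
def HasKernel {V : Type} (D : Digr V) : Prop := ∃ N, IsKernel D N

/-- A quasi-kernel: an independent set such that every outside vertex reaches
it by a directed path of length at most 2. -/
def IsQuasiKernel {V : Type} (D : Digr V) (Q : Set V) : Prop :=
  Q ⊆ D.verts ∧ IsIndependent D Q ∧
    ∀ u ∈ D.verts, u ∉ Q → ∃ v ∈ Q, (D.Adj u v ∨ ∃ w, D.Adj u w ∧ D.Adj w v)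

/-- A finite sequence `x 0, x 1, ..., x len` of vertices. -/
structure VSeq (V : Type) where
  len : ℕ
  x : ℕ → V

namespace VSeq

variable {V : Type}

/-- The digraph consisting of the vertices and consecutive arcs of the
sequence. -/
def toDigr (s : VSeq V) : Digr V where
  verts := s.x '' {i | i ≤ s.len}
  Adj u v := ∃ i < s.len, u = s.x i ∧ v = s.x (i + 1)
  adj_dom := by
    rintro u v ⟨i, hi, rfl, rfl⟩
    exact ⟨⟨i, le_of_lt hi, rfl⟩, ⟨i + 1, hi, rfl⟩⟩

end VSeq

/-- `e` is an ear of `H` in `D`: a directed path (or a directed cycle, when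
the two end vertices coincide) of `D` whose end vertices lie in `H` and whose
internal vertices are pairwise distinct and do not lie in `H`. -/
def IsEarOf {V : Type} (D H : Digr V) (e : VSeq V) : Prop :=
  1 ≤ e.len ∧
  (∀ i < e.len, D.Adj (e.x i) (e.x (i + 1))) ∧
  e.x 0 ∈ H.verts ∧ e.x e.len ∈ H.verts ∧
  (∀ i, 0 < i → i < e.len → e.x i ∉ H.verts) ∧
  (∀ i ≤ e.len, ∀ j ≤ e.len, e.x i = e.x j →
    i = j ∨ (i = 0 ∧ j = e.len) ∨ (i = e.len ∧ j = 0))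

/-- A directed path in `D`, given by its sequence of (distinct) vertices. -/
def Digr.IsPathIn {V : Type} (D : Digr V) (p : VSeq V) : Prop :=
  (∀ i ≤ p.len, p.x i ∈ D.verts) ∧
  (∀ i < p.len, D.Adj (p.x i) (p.x (i + 1))) ∧
  ∀ i ≤ p.len, ∀ j ≤ p.len, p.x i = p.x j → i = j

/-- An ear decomposition `(D_0, D_1, ..., D_k)` of the strong digraph `D`:
`D_0` is a directed cycle, `D_{i+1} = D_i ∪ P_i` for an ear `P_i` of `D_i`
in `D`, each `D_i` is a strong subdigraph of `D`, and `D_k = D`. -/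
structure EarDecomp {V : Type} (D : Digr V) where
  k : ℕ
  Ds : ℕ → Digr V
  ears : ℕ → VSeq V
  base : (Ds 0).IsCycleDigr
  strong : ∀ i ≤ k, (Ds i).IsStrong
  sub : ∀ i ≤ k, (Ds i).IsSubdigraph D
  isEar : ∀ i < k, IsEarOf D (Ds i) (ears i)
  step : ∀ i < k, Ds (i + 1) = (Ds i).union (ears i).toDigr
  top : Ds k = D

/-- `D` belongs to the family `LE_L`: it has an ear decomposition all of whose
ears have length at least `L`. -/
def InLE {V : Type} (D : Digr V) (L : ℕ) : Prop :=
  ∃ E : EarDecomp D, ∀ i < E.k, L ≤ (E.ears i).len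

/-- `T` is a tournament on `Fin n`: exactly one arc between any two distinct
vertices, and no loops. -/
def IsTournament {n : ℕ} (T : Fin n → Fin n → Prop) : Prop :=
  (∀ v, ¬ T v v) ∧ ∀ u v : Fin n, u ≠ v → (T u v ↔ ¬ T v u)

/-- There is a directed walk of length `k` from `u` to `v` in `T`. -/
def HasWalkOfLength {n : ℕ} (T : Fin n → Fin n → Prop) (k : ℕ) (u v : Fin n) :
    Prop :=
  ∃ w : ℕ → Fin n, w 0 = u ∧ w k = v ∧ ∀ m < k, T (w m) (w (m + 1))

/-- The oriented chromatic number of `D` is at most `m`: there is a tournament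
on `m` vertices and a digraph homomorphism of `D` into it. -/
def OrientedChromAtMost {V : Type} (D : Digr V) (m : ℕ) : Prop :=
  ∃ T : Fin m → Fin m → Prop, IsTournament T ∧
    ∃ φ : V → Fin m, ∀ u v, D.Adj u v → T (φ u) (φ v)


namespace LPXAux

variable {V : Type}

lemma prepend_path (D : Digr V) (p : VSeq V) (hp : D.IsPathIn p) (v : V)
    (hv : D.Adj v (p.x 0)) (hnv : ∀ m ≤ p.len, p.x m ≠ v) :
    ∃ q : VSeq V, D.IsPathIn q ∧ q.len = p.len + 1 := by
  obtain ⟨hverts, harcs, hinj⟩ := hp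
  refine ⟨⟨p.len + 1, fun t => if t = 0 then v else p.x (t - 1)⟩, ⟨?_, ?_, ?_⟩, rfl⟩
  · intro i hi
    dsimp only at hi ⊢
    split
    · exact (D.adj_dom hv).1
    · exact hverts _ (by omega)
  · intro i hi
    dsimp only at hi ⊢
    rcases Nat.eq_zero_or_pos i with h0 | h0
    · subst h0
      simp only [if_pos rfl, if_neg Nat.one_ne_zero]
      exact hv
    · rw [if_neg (by omega), if_neg (by omega)]
      have h := harcs (i - 1) (by omega)
      have he : i - 1 + 1 = i + 1 - 1 := by omega
      rwa [he] at h
  · intro i hi j hj h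
    dsimp only at hi hj h
    by_cases hi0 : i = 0 <;> by_cases hj0 : j = 0
    · omega
    · rw [if_pos hi0, if_neg hj0] at h
      exact absurd h.symm (hnv (j - 1) (by omega))
    · rw [if_neg hi0, if_pos hj0] at h
      exact absurd h (hnv (i - 1) (by omega))
    · rw [if_neg hi0, if_neg hj0] at h
      have := hinj (i - 1) (by omega) (j - 1) (by omega) h
      omega

lemma append_path (D : Digr V) (p : VSeq V) (hp : D.IsPathIn p) (v : V)
    (hv : D.Adj (p.x p.len) v) (hnv : ∀ m ≤ p.len, p.x m ≠ v) :
    ∃ q : VSeq V, D.IsPathIn q ∧ q.len = p.len + 1 := by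
  obtain ⟨hverts, harcs, hinj⟩ := hp
  refine ⟨⟨p.len + 1, fun t => if t ≤ p.len then p.x t else v⟩, ⟨?_, ?_, ?_⟩, rfl⟩
  · intro i hi
    dsimp only at hi ⊢
    split
    · exact hverts _ (by assumption)
    · exact (D.adj_dom hv).2
  · intro i hi
    dsimp only at hi ⊢
    rcases Nat.lt_or_ge i p.len with h | h
    · rw [if_pos (by omega), if_pos (by omega)]
      exact harcs i h
    · have hieq : i = p.len := by omega
      subst hieq
      rw [if_pos le_rfl, if_neg (by omega)]
      exact hv
  · intro i hi j hj h
    dsimp only at hi hj h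
    by_cases hi0 : i ≤ p.len <;> by_cases hj0 : j ≤ p.len
    · rw [if_pos hi0, if_pos hj0] at h
      exact hinj _ hi0 _ hj0 h
    · rw [if_pos hi0, if_neg hj0] at h
      exact absurd h (hnv i hi0)
    · rw [if_neg hi0, if_pos hj0] at h
      exact absurd h.symm (hnv j hj0)
    · omega

lemma subd_refl (D : Digr V) : D.IsSubdigraph D := ⟨subset_rfl, fun _ _ h => h⟩

lemma subd_trans {D₁ D₂ D₃ : Digr V} (h12 : D₁.IsSubdigraph D₂)
    (h23 : D₂.IsSubdigraph D₃) : D₁.IsSubdigraph D₃ :=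
  ⟨h12.1.trans h23.1, fun _ _ h => h23.2 (h12.2 h)⟩

lemma subd_union_left (D₁ D₂ : Digr V) : D₁.IsSubdigraph (D₁.union D₂) :=
  ⟨Set.subset_union_left, fun _ _ h => Or.inl h⟩

lemma path_mono {D D' : Digr V} (h : D'.IsSubdigraph D) {q : VSeq V}
    (hq : D'.IsPathIn q) : D.IsPathIn q :=
  ⟨fun i hi => h.1 (hq.1 i hi), fun i hi => h.2 (hq.2.1 i hi), hq.2.2⟩

lemma Ds_mono {D : Digr V} (E : EarDecomp D) :
    ∀ i j, i ≤ j → j ≤ E.k → (E.Ds i).IsSubdigraph (E.Ds j) := by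
  intro i j hij hjk
  induction j with
  | zero =>
    have : i = 0 := by omega
    subst this
    exact subd_refl _
  | succ j ihj =>
    rcases Nat.eq_or_lt_of_le hij with h | h
    · subst h
      exact subd_refl _
    · refine subd_trans (ihj (by omega) (by omega)) ?_
      rw [E.step j (by omega)]
      exact subd_union_left _ _

/-- Truncating an ear decomposition. -/
def trunc {D : Digr V} (E : EarDecomp D) (n : ℕ) (hn : E.k = n + 1) :
    EarDecomp (E.Ds n) where
  k := n
  Ds := E.Ds
  ears := E.ears
  base := E.base
  strong := fun i hi => E.strong i (by omega)
  sub := fun i hi => Ds_mono E i n hi (by omega)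
  isEar := by
    intro i hi
    obtain ⟨h1, h2, h3, h4, h5, h6⟩ := E.isEar i (by omega)
    refine ⟨h1, ?_, h3, h4, h5, h6⟩
    intro m hm
    refine (Ds_mono E (i + 1) n (by omega) (by omega)).2 ?_
    rw [E.step i (by omega)]
    exact Or.inr ⟨m, hm, rfl, rfl⟩
  step := fun i hi => E.step i (by omega)
  top := rfl

theorem main : ∀ (n : ℕ) (D : Digr V) (E : EarDecomp D), E.k = n →
    (∀ i < E.k, 2 ≤ (E.ears i).len) →
    ∃ S ⊆ D.verts, IsIndependent D S ∧
      ∀ p : VSeq V, D.IsPathIn p →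
        (∀ q : VSeq V, D.IsPathIn q → q.len ≤ p.len) →
        ∃ i ≤ p.len, p.x i ∈ S := by
  intro n
  induction n with
  | zero =>
    intro D E hk _
    have htop : E.Ds 0 = D := by rw [← hk]; exact E.top
    have hcyc : D.IsCycleDigr := htop ▸ E.base
    obtain ⟨n₀, hn₀, f, hfinj, hfverts, hfadj⟩ := hcyc
    haveI : NeZero n₀ := ⟨by omega⟩
    refine ⟨{f 0}, ?_, ?_, ?_⟩
    · intro z hz
      rw [Set.mem_singleton_iff] at hz
      subst hz
      rw [hfverts]
      exact Set.mem_range_self _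
    · intro u hu v hv hne _
      rw [Set.mem_singleton_iff] at hu hv
      exact hne (hu.trans hv.symm)
    · intro p hp hlong
      have hq : D.IsPathIn ⟨n₀ - 1, fun t => f (t : ZMod n₀)⟩ := by
        refine ⟨?_, ?_, ?_⟩
        · intro i hi
          rw [hfverts]
          exact Set.mem_range_self _
        · intro i hi
          dsimp only at hi ⊢
          rw [hfadj]
          refine ⟨(i : ZMod n₀), rfl, ?_⟩
          congr 1
          push_cast
          ring
        · intro i hi j hj h
          dsimp only at hi hj h
          have hv := congrArg ZMod.val (hfinj h)
          rw [ZMod.val_cast_of_lt (by omega), ZMod.val_cast_of_lt (by omega)] at hv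
          exact hv
      have hlow : n₀ - 1 ≤ p.len := hlong _ hq
      have hmem : ∀ t : Fin (p.len + 1), p.x ↑t ∈ Set.range f := by
        intro t
        rw [← hfverts]
        exact hp.1 _ (Nat.lt_succ_iff.mp t.isLt)
      have hgspec : ∀ t, f ((hmem t).choose) = p.x ↑t := fun t => (hmem t).choose_spec
      have hginj : Function.Injective (fun t => (hmem t).choose) := by
        intro s t h
        have h2 : p.x ↑s = p.x ↑t := by
          rw [← hgspec s, ← hgspec t]
          exact congrArg f h
        exact Fin.ext (hp.2.2 _ (Nat.lt_succ_iff.mp s.isLt) _ (Nat.lt_succ_iff.mp t.isLt) h2)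
      have hcard : p.len + 1 ≤ n₀ := by
        have := Fintype.card_le_of_injective _ hginj
        simpa [ZMod.card] using this
      have hbij : Function.Bijective (fun t => (hmem t).choose) :=
        (Fintype.bijective_iff_injective_and_card _).2
          ⟨hginj, by rw [Fintype.card_fin, ZMod.card]; omega⟩
      obtain ⟨t, ht⟩ := hbij.2 0
      refine ⟨↑t, Nat.lt_succ_iff.mp t.isLt, ?_⟩
      rw [Set.mem_singleton_iff, ← hgspec t]
      exact congrArg f ht
  | succ n ih =>
    intro D E hk hle2
    have hsubn : (E.Ds n).IsSubdigraph D := E.sub n (by omega)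
    have hDeq : D = (E.Ds n).union (E.ears n).toDigr := by
      have h1 : E.Ds (n + 1) = D := by rw [← hk]; exact E.top
      exact h1.symm.trans (E.step n (by omega))
    have hℓ : 2 ≤ (E.ears n).len := hle2 n (by omega)
    obtain ⟨h1e, harc, hea, heb, hint, hinj⟩ := E.isEar n (by omega)
    have hDadj : ∀ u v, D.Adj u v ↔ (E.Ds n).Adj u v ∨
        ∃ i, i < (E.ears n).len ∧ u = (E.ears n).x i ∧ v = (E.ears n).x (i + 1) := by
      intro u v
      constructor
      · intro h
        rw [hDeq] at h
        exact h
      · intro h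
        rw [hDeq]
        exact h
    have hDverts : D.verts = (E.Ds n).verts ∪ (E.ears n).x '' {i | i ≤ (E.ears n).len} := by
      conv_lhs => rw [hDeq]
      rfl
    have Lin : ∀ u j, 0 < j → j < (E.ears n).len → D.Adj u ((E.ears n).x j) →
        ∃ i, i + 1 = j ∧ u = (E.ears n).x i := by
      intro u j hj0 hjℓ hadj
      rw [hDadj] at hadj
      rcases hadj with h | ⟨i, hiℓ, hu, hxx⟩
      · exact absurd ((E.Ds n).adj_dom h).2 (hint j hj0 hjℓ)
      · rcases hinj j (by omega) (i + 1) (by omega) hxx with h | h | h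
        · exact ⟨i, h.symm, hu⟩
        · omega
        · omega
    have Lout : ∀ v j, 0 < j → j < (E.ears n).len → D.Adj ((E.ears n).x j) v →
        v = (E.ears n).x (j + 1) := by
      intro v j hj0 hjℓ hadj
      rw [hDadj] at hadj
      rcases hadj with h | ⟨i, hiℓ, hxx, hv⟩
      · exact absurd ((E.Ds n).adj_dom h).1 (hint j hj0 hjℓ)
      · rcases hinj j (by omega) i (by omega) hxx with h | h | h
        · rw [hv, h]
        · omega
        · omega
    have hnonew : ∀ u v, u ∈ (E.Ds n).verts → v ∈ (E.Ds n).verts →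
        D.Adj u v → (E.Ds n).Adj u v := by
      intro u v hu hv hadj
      rw [hDadj] at hadj
      rcases hadj with h | ⟨i, hiℓ, rfl, rfl⟩
      · exact h
      · exfalso
        by_cases h2 : i + 1 < (E.ears n).len
        · exact hint (i + 1) (by omega) h2 hv
        · exact hint i (by omega) (by omega) hu
    obtain ⟨S', hS'sub, hS'ind, hS'meets⟩ :=
      ih (E.Ds n) (trunc E n hk) rfl (fun i hi => hle2 i (by have h2 : i < n := hi; omega))
    -- every longest path touching an internal vertex of the last ear
    -- contains e.x 0 and e.x 1 (walking backwards) ...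
    have hdown : ∀ (p : VSeq V), D.IsPathIn p → (∀ q, D.IsPathIn q → q.len ≤ p.len) →
        ∀ i, 0 < i → i < (E.ears n).len → (∃ m ≤ p.len, p.x m = (E.ears n).x i) →
        (∃ m ≤ p.len, p.x m = (E.ears n).x 0) ∧ (∃ m ≤ p.len, p.x m = (E.ears n).x 1) := by
      intro p hp hlong
      have key : ∀ t i, i ≤ t → 0 < i → i < (E.ears n).len →
          (∃ m ≤ p.len, p.x m = (E.ears n).x i) →
          (∃ m ≤ p.len, p.x m = (E.ears n).x 0) ∧ (∃ m ≤ p.len, p.x m = (E.ears n).x 1) := by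
        intro t
        induction t with
        | zero => intro i h h0 _ _; omega
        | succ t iht =>
          intro i hit h0 hiℓ hon
          obtain ⟨m, hm, hpm⟩ := hon
          by_cases hprev : ∃ m' ≤ p.len, p.x m' = (E.ears n).x (i - 1)
          · by_cases h1 : i = 1
            · subst h1
              exact ⟨hprev, ⟨m, hm, hpm⟩⟩
            · exact iht (i - 1) (by omega) (by omega) (by omega) hprev
          · have hm0 : m = 0 := by
              by_contra hm0
              have harc' := hp.2.1 (m - 1) (by omega)
              rw [show m - 1 + 1 = m by omega, hpm] at harc'
              obtain ⟨i', hi', hu⟩ := Lin _ i h0 hiℓ harc'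
              exact hprev ⟨m - 1, by omega, by rw [hu]; congr 1; omega⟩
            have hadj0 : D.Adj ((E.ears n).x (i - 1)) (p.x 0) := by
              have ha' := harc (i - 1) (by omega)
              rw [show i - 1 + 1 = i by omega] at ha'
              rw [← hm0, hpm]
              exact ha'
            obtain ⟨q, hq, hqlen⟩ := prepend_path D p hp _ hadj0
              (fun m' hm' hc => hprev ⟨m', hm', hc⟩)
            exact absurd (hlong q hq) (by omega)
      intro i h0 hiℓ hon
      exact key i i le_rfl h0 hiℓ hon
    -- ... and contains e.x len (walking forwards)
    have hup : ∀ (p : VSeq V), D.IsPathIn p → (∀ q, D.IsPathIn q → q.len ≤ p.len) →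
        ∀ i, 0 < i → i < (E.ears n).len → (∃ m ≤ p.len, p.x m = (E.ears n).x i) →
        ∃ m ≤ p.len, p.x m = (E.ears n).x (E.ears n).len := by
      intro p hp hlong
      have key : ∀ t i, (E.ears n).len - i ≤ t → 0 < i → i < (E.ears n).len →
          (∃ m ≤ p.len, p.x m = (E.ears n).x i) →
          ∃ m ≤ p.len, p.x m = (E.ears n).x (E.ears n).len := by
        intro t
        induction t with
        | zero => intro i h h0 h1 _; omega
        | succ t iht =>
          intro i hit h0 hiℓ hon
          obtain ⟨m, hm, hpm⟩ := hon
          by_cases hnext : ∃ m' ≤ p.len, p.x m' = (E.ears n).x (i + 1)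
          · by_cases h1 : i + 1 = (E.ears n).len
            · rwa [h1] at hnext
            · exact iht (i + 1) (by omega) (by omega) (by omega) hnext
          · have hmtop : m = p.len := by
              by_contra hm0
              have harc' := hp.2.1 m (by omega)
              rw [hpm] at harc'
              have hss := Lout _ i h0 hiℓ harc'
              exact hnext ⟨m + 1, by omega, hss⟩
            have hadjv : D.Adj (p.x p.len) ((E.ears n).x (i + 1)) := by
              rw [← hmtop, hpm]
              exact harc i hiℓ
            obtain ⟨q, hq, hqlen⟩ := append_path D p hp _ hadjv
              (fun m' hm' hc => hnext ⟨m', hm', hc⟩)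
            exact absurd (hlong q hq) (by omega)
      intro i h0 hiℓ hon
      exact key ((E.ears n).len - i) i le_rfl h0 hiℓ hon
    -- dichotomy: a path either touches an internal ear vertex or stays in E.Ds n
    have hdicho : ∀ (p : VSeq V), D.IsPathIn p →
        (∃ j, 0 < j ∧ j < (E.ears n).len ∧ ∃ m ≤ p.len, p.x m = (E.ears n).x j) ∨
        (∀ m ≤ p.len, p.x m ∈ (E.Ds n).verts) := by
      intro p hp
      by_cases h : ∃ j, 0 < j ∧ j < (E.ears n).len ∧ ∃ m ≤ p.len, p.x m = (E.ears n).x j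
      · exact Or.inl h
      · refine Or.inr fun m hm => ?_
        have hv := hp.1 m hm
        rw [hDverts] at hv
        rcases hv with hv | ⟨j, hj, hje⟩
        · exact hv
        · have hjle : j ≤ (E.ears n).len := hj
          by_cases hj0 : j = 0
          · rw [← hje, hj0]; exact hea
          · by_cases hjℓ : j = (E.ears n).len
            · rw [← hje, hjℓ]; exact heb
            · exact absurd ⟨j, by omega, by omega, m, hm, hje.symm⟩ h
    have hpath' : ∀ (p : VSeq V), D.IsPathIn p → (∀ m ≤ p.len, p.x m ∈ (E.Ds n).verts) →
        (E.Ds n).IsPathIn p :=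
      fun p hp hall => ⟨fun m hm => hall m hm,
        fun m hm => hnonew _ _ (hall m (by omega)) (hall (m + 1) (by omega)) (hp.2.1 m hm),
        hp.2.2⟩
    have hlong' : ∀ (p : VSeq V), (∀ q, D.IsPathIn q → q.len ≤ p.len) →
        ∀ q, (E.Ds n).IsPathIn q → q.len ≤ p.len :=
      fun p hl q hq => hl q (path_mono hsubn hq)
    by_cases hcase : (E.ears n).x 0 ∈ S' ∨ (E.ears n).x (E.ears n).len ∈ S'
    · refine ⟨S', fun z hz => hsubn.1 (hS'sub hz), ?_, ?_⟩
      · intro u hu v hv hne hadj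
        exact hS'ind u hu v hv hne (hnonew _ _ (hS'sub hu) (hS'sub hv) hadj)
      · intro p hp hlong
        rcases hdicho p hp with ⟨j, hj0, hjℓ, hon⟩ | hall
        · rcases hcase with hca | hcb
          · obtain ⟨m, hm, hpm⟩ := (hdown p hp hlong j hj0 hjℓ hon).1
            exact ⟨m, hm, by rw [hpm]; exact hca⟩
          · obtain ⟨m, hm, hpm⟩ := hup p hp hlong j hj0 hjℓ hon
            exact ⟨m, hm, by rw [hpm]; exact hcb⟩
        · exact hS'meets p (hpath' p hp hall) (hlong' p hlong)
    · push_neg at hcase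
      obtain ⟨hna, hnb⟩ := hcase
      refine ⟨insert ((E.ears n).x 1) S', ?_, ?_, ?_⟩
      · intro z hz
        rcases Set.mem_insert_iff.mp hz with hz1 | hz'
        · rw [hz1]
          exact (D.adj_dom (harc 0 (by omega))).2
        · exact hsubn.1 (hS'sub hz')
      · intro u hu v hv hne hadj
        rw [hDadj] at hadj
        rcases Set.mem_insert_iff.mp hu with hu1 | hu' <;>
          rcases Set.mem_insert_iff.mp hv with hv1 | hv'
        · exact hne (hu1.trans hv1.symm)
        · rcases hadj with h | ⟨i, hiℓ, hxx, hv2⟩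
          · refine hint 1 (by omega) (by omega) ?_
            rw [← hu1]
            exact ((E.Ds n).adj_dom h).1
          · rcases hinj 1 (by omega) i (by omega) (hu1.symm.trans hxx) with h | h | h
            · have hv2' : v = (E.ears n).x 2 := by rw [hv2, ← h]
              by_cases h2 : (E.ears n).len = 2
              · apply hnb
                rw [h2, ← hv2']
                exact hv'
              · refine hint 2 (by omega) (by omega) ?_
                rw [← hv2']
                exact hS'sub hv'
            · omega
            · omega
        · rcases hadj with h | ⟨i, hiℓ, hxx, hv2⟩
          · refine hint 1 (by omega) (by omega) ?_
            rw [← hv1]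
            exact ((E.Ds n).adj_dom h).2
          · rcases hinj 1 (by omega) (i + 1) (by omega) (hv1.symm.trans hv2) with h | h | h
            · apply hna
              have hu0 : u = (E.ears n).x 0 := by rw [hxx]; congr 1; omega
              rw [← hu0]
              exact hu'
            · omega
            · omega
        · exact hS'ind u hu' v hv' hne (hnonew _ _ (hS'sub hu') (hS'sub hv') ((hDadj u v).mpr hadj))
      · intro p hp hlong
        rcases hdicho p hp with ⟨j, hj0, hjℓ, hon⟩ | hall
        · obtain ⟨m, hm, hpm⟩ := (hdown p hp hlong j hj0 hjℓ hon).2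
          exact ⟨m, hm, by rw [hpm]; exact Set.mem_insert _ _⟩
        · obtain ⟨m, hm, hms⟩ := hS'meets p (hpath' p hp hall) (hlong' p hlong)
          exact ⟨m, hm, Set.mem_insert_of_mem _ hms⟩

end LPXAux


/-- Every strong (finite, loopless) digraph in `LE_2` has an
independent set of vertices meeting every longest directed path. -/
theorem independent_set_meets_longest_paths_LE2 {V : Type} (D : Digr V)
    (hfin : D.verts.Finite) (hloop : D.Loopless)
    (hstrong : D.IsStrong) (hLE : InLE D 2) :
    ∃ S ⊆ D.verts, IsIndependent D S ∧
      ∀ p : VSeq V, D.IsPathIn p →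
        (∀ q : VSeq V, D.IsPathIn q → q.len ≤ p.len) →
        ∃ i ≤ p.len, p.x i ∈ S := by
  obtain ⟨E, hE⟩ := hLE
  exact LPXAux.main E.k D E rfl hE
end

section
/- Let D be a strong nonseparable digraph with an ear decomposition (D_0, D_1, ..., D_k), and let P_i = (x_0, x_1, ..., x_{r-1}, x_r) be the ear of D_i in D, with l(P_i) ≥ 2. Suppose D_i has a kernel N and one of the following holds: (1) x_0, x_r ∈ N and l(P_i) is even; (2) x_0 ∈ N, x_r ∉ N and l(P_i) is odd; (3) x_0 ∉ N and x_r ∈ N; (4) x_0, x_r ∉ N. Then D_{i+1} has a kernel. -/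
/-- In an ear decomposition `(D_0, ..., D_k)`, if the ear
`P_i = (x_0, ..., x_r)` of `D_i` has length at least `2`, `D_i` has a kernel
`N` and one of the four listed conditions holds, then `D_{i+1}` has a
kernel. -/
theorem kernel_ascends_in_ear_decomposition {V : Type} (D : Digr V)
    (hfin : D.verts.Finite) (hloop : D.Loopless)
    (hDstrong : D.IsStrong) (hDns : D.IsNonseparable)
    (E : EarDecomp D)
    (i : ℕ) (hik : i < E.k)
    (hlen : 2 ≤ (E.ears i).len)
    (N : Set V) (hN : IsKernel (E.Ds i) N)
    (hcase :
      ((E.ears i).x 0 ∈ N ∧ (E.ears i).x (E.ears i).len ∈ N ∧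
        Even (E.ears i).len) ∨
      ((E.ears i).x 0 ∈ N ∧ (E.ears i).x (E.ears i).len ∉ N ∧
        Odd (E.ears i).len) ∨
      ((E.ears i).x 0 ∉ N ∧ (E.ears i).x (E.ears i).len ∈ N) ∨
      ((E.ears i).x 0 ∉ N ∧ (E.ears i).x (E.ears i).len ∉ N)) :
    HasKernel (E.Ds (i + 1)) := by
  classical
  set r := (E.ears i).len with hrdef
  set x := (E.ears i).x with hxdef
  obtain ⟨hsubN, hind, habs⟩ := hN
  obtain ⟨hr1, hadjP, hx0, hxr, hint, hinj⟩ := E.isEar i hik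
  -- the parity of chosen internal indices, measured from the end of the ear
  set ε : ℕ := if x r ∈ N then 0 else 1 with hεdef
  have hε01 : ε = 0 ∨ ε = 1 := by
    by_cases h : x r ∈ N <;> simp [hεdef, h]
  have hεN : ε = 0 ↔ x r ∈ N := by
    by_cases h : x r ∈ N <;> simp [hεdef, h]
  -- the chosen internal vertices
  set S : Set V := {v | ∃ j, 1 ≤ j ∧ j + 1 ≤ r ∧ (r - j) % 2 = ε ∧ v = x j}
    with hSdef
  -- key condition from the four cases: if `x 0 ∈ N` then `x 1` is not chosen
  have hC : x 0 ∈ N → (r - 1) % 2 ≠ ε := by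
    intro h0
    rcases hcase with ⟨_, hrN, heven⟩ | ⟨_, hrN, hodd⟩ | ⟨h0', _⟩ | ⟨h0', _⟩
    · have hε0 : ε = 0 := by simp [hεdef, hrN]
      have : r % 2 = 0 := Nat.even_iff.mp heven
      omega
    · have hε1 : ε = 1 := by simp [hεdef, hrN]
      have : r % 2 = 1 := Nat.odd_iff.mp hodd
      omega
    · exact absurd h0 h0'
    · exact absurd h0 h0'
  -- characterizations of `D_{i+1}`
  have hAdj : ∀ u v, (E.Ds (i + 1)).Adj u v ↔
      (E.Ds i).Adj u v ∨ ∃ m, m < r ∧ u = x m ∧ v = x (m + 1) := by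
    intro u v
    rw [E.step i hik]
    exact Iff.rfl
  have hVerts : (E.Ds (i + 1)).verts = (E.Ds i).verts ∪ x '' {j | j ≤ r} := by
    rw [E.step i hik]
    rfl
  -- membership in `D_i` forces an endpoint index
  have hmem : ∀ j ≤ r, x j ∈ (E.Ds i).verts → j = 0 ∨ j = r := by
    intro j hj hjmem
    by_contra hcon
    push_neg at hcon
    exact hint j (by omega) (by omega) hjmem
  -- members of `S` are internal, hence not in `D_i`
  have hSint : ∀ v ∈ S, v ∉ (E.Ds i).verts := by
    rintro v ⟨j, hj1, hjr, _, rfl⟩ hv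
    exact hint j hj1 (by omega) hv
  refine ⟨N ∪ S, ?_, ?_, ?_⟩
  · rw [hVerts]
    rintro v (hv | ⟨j, hj1, hjr, _, rfl⟩)
    · exact Or.inl (hsubN hv)
    · exact Or.inr ⟨j, Nat.le_of_succ_le hjr, rfl⟩
  · -- independence
    intro u hu v hv hne hadj
    rw [hAdj] at hadj
    rcases hadj with hadj | ⟨m, hm, rfl, rfl⟩
    · -- an arc of D_i : both endpoints in D_i, so neither is in S
      rcases hu with hu | hu
      · rcases hv with hv | hv
        · exact hind u hu v hv hne hadj
        · exact hSint _ hv ((E.Ds i).adj_dom hadj).2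
      · exact hSint _ hu ((E.Ds i).adj_dom hadj).1
    · -- an arc of the ear
      rcases hu with hu | ⟨j, hj1, hjr, hjpar, hju⟩
      · -- `x m ∈ N`, so `m = 0` (using `m < r`)
        have hm0 : m = 0 := by
          rcases hmem m (le_of_lt hm) (hsubN hu) with h | h
          · exact h
          · omega
        subst hm0
        rcases hv with hv | ⟨j, hj1, hjr, hjpar, hjv⟩
        · -- `x 1 ∈ N ⊆ D_i.verts` but `x 1` is internal
          exact hint 1 one_pos (by omega) (hsubN hv)
        · -- `x 1 ∈ S` with `x 0 ∈ N` contradicts `hC`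
          have hj : j = 1 := by
            rcases hinj j (by omega) 1 (by omega) hjv.symm with h | h | h
            · exact h
            · omega
            · omega
          subst hj
          exact hC hu hjpar
      · -- `u = x j ∈ S`
        have hjm : j = m := by
          rcases hinj j (by omega) m (le_of_lt hm) hju.symm with h | h | h
          · exact h
          · omega
          · omega
        subst hjm
        rcases hv with hv | ⟨j', hj'1, hj'r, hj'par, hj'v⟩
        · -- `x (j+1) ∈ N ⊆ D_i.verts` forces `j + 1 = r`, contradicting parity
          have hjr' : j + 1 = r := by
            rcases hmem (j + 1) (by omega) (hsubN hv) with h | h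
            · omega
            · exact h
          have hε0 : ε = 0 := hεN.mpr (hjr' ▸ hv)
          omega
        · -- two consecutive chosen vertices: parity contradiction
          have hj' : j' = j + 1 := by
            rcases hinj j' (by omega) (j + 1) (by omega) hj'v.symm with h | h | h
            · exact h
            · omega
            · omega
          omega
  · -- absorbency
    intro u humem hu
    rw [hVerts] at humem
    rw [Set.mem_union, not_or] at hu
    obtain ⟨huN, huS⟩ := hu
    by_cases hui : u ∈ (E.Ds i).verts
    · obtain ⟨v, hvN, hvadj⟩ := habs u hui huN
      exact ⟨v, Or.inl hvN, (hAdj u v).mpr (Or.inl hvadj)⟩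
    · obtain ⟨j, hj, rfl⟩ := humem.resolve_left hui
      simp only [Set.mem_setOf_eq] at hj
      have hj1 : 1 ≤ j := by
        rcases Nat.eq_zero_or_pos j with h | h
        · exact absurd (h ▸ hx0) hui
        · exact h
      have hjr : j + 1 ≤ r := by
        rcases eq_or_lt_of_le hj with h | h
        · exact absurd (h ▸ hxr) hui
        · omega
      have hjpar : (r - j) % 2 ≠ ε := by
        intro h
        exact huS ⟨j, hj1, hjr, h, rfl⟩
      by_cases hlast : j + 1 = r
      · -- absorbed by `x r ∈ N`
        have hε0 : ε = 0 := by omega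
        refine ⟨x r, Or.inl (hεN.mp hε0), (hAdj _ _).mpr (Or.inr ⟨j, by omega, rfl, by rw [hlast]⟩)⟩
      · -- absorbed by the next chosen internal vertex
        have hpar' : (r - (j + 1)) % 2 = ε := by omega
        refine ⟨x (j + 1), Or.inr ⟨j + 1, by omega, by omega, hpar', rfl⟩,
          (hAdj _ _).mpr (Or.inr ⟨j, by omega, rfl, rfl⟩)⟩
end

section
/- Let D be a strong nonseparable digraph with an ear decomposition (D_0, D_1, ..., D_k), and let P_i = (x_0, x_1, ..., x_{r-1}, x_r) be the ear of D_i in D, with l(P_i) ≥ 2. If D_i has a kernel N but D_{i+1} has no kernel, then one of the following holds: (1) x_0, x_r ∈ N and l(P_i) is odd; (2) x_0 ∈ N, x_r ∉ N and l(P_i) is even. -/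
/-- In an ear decomposition `(D_0, ..., D_k)`, if the ear
`P_i = (x_0, ..., x_r)` of `D_i` has length at least `2`, `D_i` has a kernel
`N` but `D_{i+1}` has no kernel, then either `x_0, x_r ∈ N` and `l(P_i)` is
odd, or `x_0 ∈ N`, `x_r ∉ N` and `l(P_i)` is even. -/
theorem kernel_ascent_options {V : Type} (D : Digr V)
    (hfin : D.verts.Finite) (hloop : D.Loopless)
    (hDstrong : D.IsStrong) (hDns : D.IsNonseparable)
    (E : EarDecomp D)
    (i : ℕ) (hik : i < E.k)
    (hlen : 2 ≤ (E.ears i).len)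
    (N : Set V) (hN : IsKernel (E.Ds i) N)
    (hnoK : ¬ HasKernel (E.Ds (i + 1))) :
    ((E.ears i).x 0 ∈ N ∧ (E.ears i).x (E.ears i).len ∈ N ∧
      Odd (E.ears i).len) ∨
    ((E.ears i).x 0 ∈ N ∧ (E.ears i).x (E.ears i).len ∉ N ∧
      Even (E.ears i).len) := by
  classical
  by_contra hcon
  obtain ⟨hNsub, hNind, hNabs⟩ := hN
  obtain ⟨hlen1, hadjP, hx0D, hxrD, hint, hinj⟩ := E.isEar i hik
  set r := (E.ears i).len with hr
  set x := (E.ears i).x with hx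
  have hinj' : ∀ m, 1 ≤ m → m < r → ∀ j ≤ r, x j = x m → j = m := by
    intro m hm1 hmr j hj hje
    rcases hinj j hj m (le_of_lt hmr) hje with h | ⟨h1, h2⟩ | ⟨h1, h2⟩ <;> omega
  obtain ⟨ε, hε01, hεiff⟩ : ∃ ε : ℕ, ε ≤ 1 ∧ (ε = 0 ↔ x r ∈ N) := by
    by_cases h : x r ∈ N
    · exact ⟨0, by omega, by simp [h]⟩
    · exact ⟨1, by omega, by simp [h]⟩
  have hbad : ¬ (x 0 ∈ N ∧ (r - 1) % 2 = ε) := by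
    rintro ⟨h0, hpar⟩
    rcases Nat.lt_or_ge ε 1 with h | h
    · have hε0 : ε = 0 := by omega
      exact hcon (Or.inl ⟨h0, hεiff.mp hε0, by rw [Nat.odd_iff]; omega⟩)
    · have hε1 : ε = 1 := by omega
      have hxr : x r ∉ N := fun hh => by have := hεiff.mpr hh; omega
      exact hcon (Or.inr ⟨h0, hxr, by rw [Nat.even_iff]; omega⟩)
  set S : Set V := {v | ∃ m, 1 ≤ m ∧ m < r ∧ (r - m) % 2 = ε ∧ v = x m} with hS
  refine hnoK ⟨N ∪ S, ?_⟩
  rw [E.step i hik]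
  refine ⟨?_, ?_, ?_⟩
  · rintro v (hv | ⟨m, hm1, hmr, hpar, rfl⟩)
    · exact Or.inl (hNsub hv)
    · exact Or.inr ⟨m, le_of_lt hmr, rfl⟩
  · rintro u hu v hv hne hadjuv
    have ha' : (E.Ds i).Adj u v ∨ ∃ j, j < r ∧ u = x j ∧ v = x (j + 1) := hadjuv
    rcases ha' with ha | ⟨j, hjr, rfl, rfl⟩
    · rcases hu with hu | ⟨m, hm1, hmr, hpar, rfl⟩
      · rcases hv with hv | ⟨m, hm1, hmr, hpar, rfl⟩
        · exact hNind u hu v hv hne ha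
        · exact hint m hm1 hmr ((E.Ds i).adj_dom ha).2
      · exact hint m hm1 hmr ((E.Ds i).adj_dom ha).1
    · rcases hu with hu | ⟨m, hm1, hmr, hpar, hueq⟩
      · have hj0 : j = 0 := by
          by_contra h
          exact hint j (by omega) hjr (hNsub hu)
        subst hj0
        rcases hv with hv | ⟨m, hm1, hmr, hpar, hveq⟩
        · exact hint (0 + 1) (by omega) (by omega) (hNsub hv)
        · have hm := hinj' m hm1 hmr (0 + 1) (by omega) hveq
          exact hbad ⟨hu, by omega⟩
      · have hjm : j = m := hinj' m hm1 hmr j (le_of_lt hjr) hueq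
        rcases hv with hv | ⟨m', hm1', hmr', hpar', hveq'⟩
        · have hjr1 : j + 1 = r := by
            by_contra h
            exact hint (j + 1) (by omega) (by omega) (hNsub hv)
          have hxrN : x r ∈ N := by rw [← hjr1]; exact hv
          have := hεiff.mpr hxrN
          omega
        · have hm' : j + 1 = m' := hinj' m' hm1' hmr' (j + 1) (by omega) hveq'
          omega
  · rintro u hu huK
    have huN : u ∉ N := fun h => huK (Or.inl h)
    have huS : u ∉ S := fun h => huK (Or.inr h)
    have hu2 : u ∈ (E.Ds i).verts ∨ u ∈ x '' {j | j ≤ r} := hu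
    have habs : u ∈ (E.Ds i).verts → ∃ v ∈ N ∪ S, ((E.Ds i).union (E.ears i).toDigr).Adj u v := by
      intro hD
      obtain ⟨v, hvN, hadj'⟩ := hNabs u hD huN
      exact ⟨v, Or.inl hvN, Or.inl hadj'⟩
    rcases hu2 with hD | ⟨j, hj, rfl⟩
    · exact habs hD
    · by_cases hj0 : j = 0
      · subst hj0; exact habs hx0D
      by_cases hjrr : j = r
      · exact habs (by rw [hjrr]; exact hxrD)
      have hjle : j ≤ r := hj
      have hj1 : 1 ≤ j := by omega
      have hjr' : j < r := by omega
      have hparne : (r - j) % 2 ≠ ε := fun h => huS ⟨j, hj1, hjr', h, rfl⟩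
      by_cases hjlast : j + 1 = r
      · have hε0 : ε = 0 := by omega
        exact ⟨x r, Or.inl (hεiff.mp hε0), Or.inr ⟨j, hjr', rfl, by rw [hjlast]⟩⟩
      · have hpar1 : (r - (j + 1)) % 2 = ε := by omega
        exact ⟨x (j + 1), Or.inr ⟨j + 1, by omega, by omega, hpar1, rfl⟩,
          Or.inr ⟨j, hjr', rfl, rfl⟩⟩
end

section
/- Let D be a strong nonseparable digraph with an ear decomposition (D_0, D_1, ..., D_k) in which every ear has length at least 2. If D has no kernel, then one of the following holds: (1) D_j has no kernel for every j ∈ {0, ..., k}; in particular D_0 is an odd cycle; or (2) there is j ∈ {0, ..., k} such that D_j has a kernel N but D_i has no kernel for every i ≥ j+1; in particular, writing P_j = (x_0, x_1, ..., x_{r-1}, x_r) for the ear of D_j, either (a) x_0, x_r ∈ N and l(P_j) is odd, or (b) x_0 ∈ N, x_r ∉ N and l(P_j) is even. -/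
/-- An even directed cycle has a kernel (alternate vertices). -/
lemma even_cycle_hasKernel {V : Type} (D : Digr V) (n : ℕ)
    (hC : D.IsCycleOfLength n) (hn : Even n) : HasKernel D := by
  obtain ⟨hn2, f, hf, hverts, hadj⟩ := hC
  haveI : NeZero n := ⟨by omega⟩
  haveI : Fact (1 < n) := ⟨by omega⟩
  have hne : n % 2 = 0 := Nat.even_iff.mp hn
  have hval1 : ∀ i : ZMod n, (i + 1).val = (i.val + 1) % n := by
    intro i
    rw [ZMod.val_add, ZMod.val_one]
  refine ⟨f '' {i | (ZMod.val i) % 2 = 0}, ?_, ?_, ?_⟩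
  · rintro u ⟨i, _, rfl⟩
    rw [hverts]; exact ⟨i, rfl⟩
  · rintro u ⟨i, hi, rfl⟩ v ⟨j, hj, rfl⟩ hne' hadjuv
    obtain ⟨a, hu, hv⟩ := (hadj _ _).mp hadjuv
    have ha : a = i := hf hu.symm ▸ rfl
    subst ha
    have hji : j = a + 1 := hf hv
    have hlt : a.val < n := ZMod.val_lt a
    have : j.val = (a.val + 1) % n := by rw [hji, hval1]
    rcases eq_or_lt_of_le (Nat.succ_le_of_lt hlt) with h | h
    · have h' : a.val + 1 = n := h
      have hz : (a.val + 1) % n = 0 := by rw [h']; exact Nat.mod_self n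
      simp only [Set.mem_setOf_eq] at hi hj
      omega
    · rw [Nat.mod_eq_of_lt h] at this
      simp only [Set.mem_setOf_eq] at hi hj
      omega
  · rintro u hu huN
    rw [hverts] at hu
    obtain ⟨i, rfl⟩ := hu
    have hi : i.val % 2 = 1 := by
      rcases Nat.mod_two_eq_zero_or_one i.val with h | h
      · exact absurd ⟨i, h, rfl⟩ huN
      · exact h
    refine ⟨f (i + 1), ⟨i + 1, ?_, rfl⟩, (hadj _ _).mpr ⟨i, rfl, rfl⟩⟩
    have hlt : i.val < n := ZMod.val_lt i
    have hv1 := hval1 i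
    simp only [Set.mem_setOf_eq]
    rcases eq_or_lt_of_le (Nat.succ_le_of_lt hlt) with h | h
    · have h' : i.val + 1 = n := h
      rw [hv1, h', Nat.mod_self]
    · rw [hv1, Nat.mod_eq_of_lt h]
      omega

/-- Key construction: extending a kernel of `Dj` across an ear of parity-type
`t` gives a kernel of the union. -/
lemma ear_kernel {V : Type} (Dj : Digr V) (e : VSeq V) (N : Set V) (t : ℕ)
    (hN : IsKernel Dj N) (hr : 2 ≤ e.len)
    (hx0 : e.x 0 ∈ Dj.verts) (hxr : e.x e.len ∈ Dj.verts)
    (hint : ∀ i, 0 < i → i < e.len → e.x i ∉ Dj.verts)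
    (hinj : ∀ i ≤ e.len, ∀ j ≤ e.len, e.x i = e.x j →
      i = j ∨ (i = 0 ∧ j = e.len) ∨ (i = e.len ∧ j = 0))
    (ht : t < 2)
    (h1 : ((e.len - 1) % 2 = t ↔ e.x e.len ∉ N))
    (h2 : e.x 0 ∈ N → t = 0) :
    HasKernel (Dj.union e.toDigr) := by
  obtain ⟨hNsub, hNind, hNabs⟩ := hN
  refine ⟨N ∪ e.x '' {i | 0 < i ∧ i < e.len ∧ i % 2 = t}, ?_, ?_, ?_⟩
  · rintro u (hu | ⟨i, ⟨hi0, hir, hit⟩, rfl⟩)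
    · exact Or.inl (hNsub hu)
    · exact Or.inr ⟨i, le_of_lt hir, rfl⟩
  · rintro u (hu | ⟨i, ⟨hi0, hir, hit⟩, rfl⟩) v (hv | ⟨j, ⟨hj0, hjr, hjt⟩, rfl⟩)
      hne hadj
    · rcases hadj with h | ⟨a, har, hu', hv'⟩
      · exact hNind u hu v hv hne h
      · have ha0 : a = 0 := by
          by_contra h0
          exact hint a (Nat.pos_of_ne_zero h0) har (hu' ▸ hNsub hu)
        subst ha0
        exact hint 1 one_pos (by omega) (hv' ▸ hNsub hv)
    · rcases hadj with h | ⟨a, har, hu', hv'⟩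
      · exact hint j hj0 hjr (Dj.adj_dom h).2
      · have ha0 : a = 0 := by
          by_contra h0
          exact hint a (Nat.pos_of_ne_zero h0) har (hu' ▸ hNsub hu)
        subst ha0
        have hj1 : j = 1 := by
          rcases hinj j (le_of_lt hjr) 1 (by omega) hv' with h | ⟨h, h'⟩ | ⟨h, h'⟩ <;>
            omega
        have ht0 : t = 0 := h2 (hu' ▸ hu)
        omega
    · rcases hadj with h | ⟨a, har, hu', hv'⟩
      · exact hint i hi0 hir (Dj.adj_dom h).1
      · have ha : a = i := by
          rcases hinj i (le_of_lt hir) a (le_of_lt har) hu' with h | ⟨h, h'⟩ | ⟨h, h'⟩ <;>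
            omega
        subst ha
        have hi1 : a + 1 = e.len := by
          by_contra hc
          exact hint (a + 1) (by omega) (by omega) (hv' ▸ hNsub hv)
        have : e.x e.len ∉ N := h1.mp (by omega)
        rw [← hi1] at this
        exact this (hv' ▸ hv)
    · rcases hadj with h | ⟨a, har, hu', hv'⟩
      · exact hint i hi0 hir (Dj.adj_dom h).1
      · have ha : a = i := by
          rcases hinj i (le_of_lt hir) a (le_of_lt har) hu' with h | ⟨h, h'⟩ | ⟨h, h'⟩ <;>
            omega
        subst ha
        have hj1 : j = a + 1 := by
          rcases hinj j (le_of_lt hjr) (a + 1) (by omega) hv' with h | ⟨h, h'⟩ | ⟨h, h'⟩ <;>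
            omega
        omega
  · rintro u hu huN
    by_cases hD : u ∈ Dj.verts
    · have huN' : u ∉ N := fun h => huN (Or.inl h)
      obtain ⟨v, hv, hadj⟩ := hNabs u hD huN'
      exact ⟨v, Or.inl hv, Or.inl hadj⟩
    · rcases hu with hu | ⟨i, hir, rfl⟩
      · exact absurd hu hD
      · simp only [Set.mem_setOf_eq] at hir
        have hi0 : i ≠ 0 := fun h => hD (h ▸ hx0)
        have hiR : i ≠ e.len := fun h => hD (h ▸ hxr)
        have hilt : i < e.len := lt_of_le_of_ne hir hiR
        have hitne : i % 2 ≠ t := fun h =>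
          huN (Or.inr ⟨i, ⟨Nat.pos_of_ne_zero hi0, hilt, h⟩, rfl⟩)
        refine ⟨e.x (i + 1), ?_, Or.inr ⟨i, hilt, rfl, rfl⟩⟩
        rcases eq_or_lt_of_le (Nat.succ_le_of_lt hilt) with h | h
        · have : e.x e.len ∈ N := by
            by_contra hc
            have := h1.mpr hc
            omega
          rw [← h] at this
          exact Or.inl this
        · exact Or.inr ⟨i + 1, ⟨by omega, h, by omega⟩, rfl⟩

/-- If a kernel `N` of `Dj` cannot be extended across an ear (the union has
no kernel), then the endpoint/parity dichotomy holds. -/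
lemma ear_ext {V : Type} (Dj : Digr V) (e : VSeq V) (N : Set V)
    (hN : IsKernel Dj N) (hr : 2 ≤ e.len)
    (hx0 : e.x 0 ∈ Dj.verts) (hxr : e.x e.len ∈ Dj.verts)
    (hint : ∀ i, 0 < i → i < e.len → e.x i ∉ Dj.verts)
    (hinj : ∀ i ≤ e.len, ∀ j ≤ e.len, e.x i = e.x j →
      i = j ∨ (i = 0 ∧ j = e.len) ∨ (i = e.len ∧ j = 0))
    (hnoK : ¬ HasKernel (Dj.union e.toDigr)) :
    (e.x 0 ∈ N ∧ e.x e.len ∈ N ∧ Odd e.len) ∨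
    (e.x 0 ∈ N ∧ e.x e.len ∉ N ∧ Even e.len) := by
  by_cases h0 : e.x 0 ∈ N
  · by_cases hR : e.x e.len ∈ N
    · left
      refine ⟨h0, hR, ?_⟩
      rw [Nat.odd_iff]
      by_contra hpar
      exact hnoK (ear_kernel Dj e N 0 hN hr hx0 hxr hint hinj (by omega)
        (iff_of_false (by omega) (not_not_intro hR)) (fun _ => rfl))
    · right
      refine ⟨h0, hR, ?_⟩
      rw [Nat.even_iff]
      by_contra hpar
      exact hnoK (ear_kernel Dj e N 0 hN hr hx0 hxr hint hinj (by omega)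
        (iff_of_true (by omega) hR) (fun _ => rfl))
  · exfalso
    by_cases hR : e.x e.len ∈ N
    · exact hnoK (ear_kernel Dj e N (e.len % 2) hN hr hx0 hxr hint hinj (by omega)
        (iff_of_false (by omega) (not_not_intro hR)) (fun h => absurd h h0))
    · exact hnoK (ear_kernel Dj e N ((e.len - 1) % 2) hN hr hx0 hxr hint hinj
        (by omega) (iff_of_true rfl hR) (fun h => absurd h h0))

/-- Let `(D_0, ..., D_k)` be an ear decomposition of `D`
with all ears of length at least `2`.  If `D` has no kernel, then either no
`D_j` has a kernel (and `D_0` is an odd cycle), or there are a `j` and a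
kernel `N` of `D_j` such that no `D_i` with `i ≥ j+1` has a kernel and one of
the two listed conditions on the ear `P_j` holds. -/
theorem no_kernel_ear_decomposition_dichotomy {V : Type} (D : Digr V)
    (hfin : D.verts.Finite) (hloop : D.Loopless)
    (hDstrong : D.IsStrong) (hDns : D.IsNonseparable)
    (E : EarDecomp D)
    (hlen : ∀ i < E.k, 2 ≤ (E.ears i).len)
    (hK : ¬ HasKernel D) :
    ((∀ j ≤ E.k, ¬ HasKernel (E.Ds j)) ∧
      ∃ n, Odd n ∧ (E.Ds 0).IsCycleOfLength n) ∨
    (∃ j < E.k, ∃ N : Set V, IsKernel (E.Ds j) N ∧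
      (∀ i, j + 1 ≤ i → i ≤ E.k → ¬ HasKernel (E.Ds i)) ∧
      (((E.ears j).x 0 ∈ N ∧ (E.ears j).x (E.ears j).len ∈ N ∧
          Odd (E.ears j).len) ∨
       ((E.ears j).x 0 ∈ N ∧ (E.ears j).x (E.ears j).len ∉ N ∧
          Even (E.ears j).len))) := by
  classical
  by_cases hall : ∀ j ≤ E.k, ¬ HasKernel (E.Ds j)
  · left
    refine ⟨hall, ?_⟩
    obtain ⟨n, hC⟩ := E.base
    refine ⟨n, ?_, hC⟩
    rw [Nat.odd_iff, ← Nat.not_even_iff]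
    intro hev
    exact hall 0 (Nat.zero_le _) (even_cycle_hasKernel _ n hC hev)
  · right
    push_neg at hall
    obtain ⟨j₀, hj₀k, hj₀K⟩ := hall
    set P : ℕ → Prop := fun j => HasKernel (E.Ds j) with hP
    have hjP : P (Nat.findGreatest P E.k) := Nat.findGreatest_spec hj₀k hj₀K
    set j := Nat.findGreatest P E.k with hj
    have hjle : j ≤ E.k := Nat.findGreatest_le _
    have hKk : ¬ P E.k := by
      simp only [hP]
      rw [E.top]
      exact hK
    have hjlt : j < E.k := lt_of_le_of_ne hjle (fun h => hKk (h ▸ hjP))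
    have hgt : ∀ i, j + 1 ≤ i → i ≤ E.k → ¬ HasKernel (E.Ds i) := by
      intro i hi1 hi2
      exact Nat.findGreatest_is_greatest (P := P) (by omega) hi2
    obtain ⟨N, hN⟩ := hjP
    obtain ⟨h1e, hadje, hx0, hxr, hint, hinj⟩ := E.isEar j hjlt
    have hstep := E.step j hjlt
    have hnoK : ¬ HasKernel ((E.Ds j).union (E.ears j).toDigr) :=
      hstep ▸ hgt (j + 1) le_rfl hjlt
    exact ⟨j, hjlt, N, hN, hgt,
      ear_ext (E.Ds j) (E.ears j) N hN (hlen j hjlt) hx0 hxr hint hinj hnoK⟩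
end
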